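/- As N → ∞ with m ≥ 0 fixed, Φ_m(N) = 4/(π(2m+1)) + π/(24 N²) + O(N^{-4}), where Φ_m(N) = (2/N) ∑_{k=0}^{N-1} sin(π(2k+1)/(4N)) cos^{2m}(π(2k+1)/(4N)). -/

import Mathlib

open Real Finset Filter Asymptotics

lemma sum_choose_sin (n : ℕ) (x : ℝ) :
    ∑ r ∈ Finset.range (n+1), (n.choose r : ℝ) * Real.sin (((n:ℝ)+1-2*r)*x)
      = 2^n * Real.sin x * Real.cos x ^ n := by
  induction n with
  | zero => simp
  | succ n ih =>
    have key : ∀ a : ℝ, Real.sin ((a+1)*x) + Real.sin ((a-1)*x)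
        = 2 * Real.cos x * Real.sin (a*x) := by
      intro a
      have h1 := Real.sin_add (a*x) x
      have h2 := Real.sin_sub (a*x) x
      have e1 : (a+1)*x = a*x + x := by ring
      have e2 : (a-1)*x = a*x - x := by ring
      rw [e1, e2, h1, h2]; ring
    push_cast
    set F : ℕ → ℝ := fun r => ((n+1).choose r : ℝ) * Real.sin ((((n:ℝ)+1)+1-2*r)*x) with hF
    set G : ℕ → ℝ := fun r => (n.choose r : ℝ) * Real.sin (((n:ℝ)+2-2*r)*x) with hG
    have hsplit : ∀ r ∈ Finset.range (n+1),
        F (r+1) = G (r+1) + (n.choose r : ℝ) * Real.sin (((n:ℝ)-2*r)*x) := by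
      intro r _
      simp only [hF, hG, Nat.choose_succ_succ]
      push_cast
      have e1 : ((n:ℝ)+1+1-2*(r+1))*x = ((n:ℝ)-2*r)*x := by ring
      have e2 : ((n:ℝ)+2-2*(r+1))*x = ((n:ℝ)-2*r)*x := by ring
      rw [e1, e2]; ring
    calc ∑ r ∈ Finset.range (n+1+1), F r
        = ∑ r ∈ Finset.range (n+1), F (r+1) + F 0 := Finset.sum_range_succ' F (n+1)
      _ = (∑ r ∈ Finset.range (n+1), G (r+1) + G 0)
          + ∑ r ∈ Finset.range (n+1), (n.choose r : ℝ) * Real.sin (((n:ℝ)-2*r)*x) := by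
          rw [Finset.sum_congr rfl hsplit, Finset.sum_add_distrib]
          have : F 0 = G 0 := by
            simp only [hF, hG, Nat.choose_zero_right, Nat.cast_one, Nat.cast_zero]
            ring_nf
          rw [this]; ring
      _ = ∑ r ∈ Finset.range (n+2), G r
          + ∑ r ∈ Finset.range (n+1), (n.choose r : ℝ) * Real.sin (((n:ℝ)-2*r)*x) := by
          rw [Finset.sum_range_succ' G (n+1)]
      _ = ∑ r ∈ Finset.range (n+1), G r
          + ∑ r ∈ Finset.range (n+1), (n.choose r : ℝ) * Real.sin (((n:ℝ)-2*r)*x) := by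
          rw [Finset.sum_range_succ G (n+1)]
          simp [hG]
      _ = ∑ r ∈ Finset.range (n+1),
            ((n.choose r : ℝ) * Real.sin (((n:ℝ)+2-2*r)*x)
              + (n.choose r : ℝ) * Real.sin (((n:ℝ)-2*r)*x)) := by
          rw [Finset.sum_add_distrib]
      _ = ∑ r ∈ Finset.range (n+1),
            2 * Real.cos x * ((n.choose r : ℝ) * Real.sin (((n:ℝ)+1-2*r)*x)) := by
          refine Finset.sum_congr rfl fun r _ => ?_
          have := key ((n:ℝ)+1-2*r)
          have e1 : ((n:ℝ)+1-2*r+1) = ((n:ℝ)+2-2*r) := by ring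
          have e2 : ((n:ℝ)+1-2*r-1) = ((n:ℝ)-2*r) := by ring
          rw [e1, e2] at this
          rw [← mul_add, this]; ring
      _ = 2 * Real.cos x * (2^n * Real.sin x * Real.cos x ^ n) := by
          rw [← Finset.mul_sum, ih]
      _ = 2^(n+1) * Real.sin x * Real.cos x ^ (n+1) := by ring

lemma sum_sin_odd_mul (a : ℝ) (N : ℕ) :
    (∑ k ∈ Finset.range N, Real.sin ((2*(k:ℝ)+1)*a)) * Real.sin a
      = (1 - Real.cos (2*(N:ℝ)*a)) / 2 := by
  induction N with
  | zero => simp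
  | succ N ih =>
    rw [Finset.sum_range_succ, add_mul, ih]
    have h : Real.cos (2*(N:ℝ)*a) - Real.cos (2*((N:ℝ)+1)*a)
        = 2 * Real.sin ((2*(N:ℝ)+1)*a) * Real.sin a := by
      have := Real.cos_sub_cos (2*(N:ℝ)*a) (2*((N:ℝ)+1)*a)
      rw [this]
      have e1 : (2*(N:ℝ)*a + 2*((N:ℝ)+1)*a)/2 = (2*(N:ℝ)+1)*a := by ring
      have e2 : (2*(N:ℝ)*a - 2*((N:ℝ)+1)*a)/2 = -a := by ring
      rw [e1, e2, Real.sin_neg]; ring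
    push_cast
    nlinarith [h]

lemma cos_odd_half_pi (m r : ℕ) : Real.cos (((2*m:ℝ)+1-2*r)*π/2) = 0 := by
  have t : ((2*m:ℝ)+1-2*r)*π/2 = ((m:ℝ)-(r:ℝ)) * π + π/2 := by push_cast; ring
  have hz : Real.sin (((m:ℤ)-(r:ℤ) : ℤ) * π) = 0 := Real.sin_int_mul_pi _
  push_cast at hz
  rw [t, Real.cos_add, Real.cos_pi_div_two, Real.sin_pi_div_two, hz]
  ring

lemma sum_sin_exact (m r N : ℕ) (hN : 0 < N)
    (hs : Real.sin (((2*m:ℝ)+1-2*r)*π/(4*N)) ≠ 0) :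
    ∑ k ∈ Finset.range N, Real.sin ((2*(k:ℝ)+1) * (((2*m:ℝ)+1-2*r)*π/(4*N)))
      = 1 / (2 * Real.sin (((2*m:ℝ)+1-2*r)*π/(4*N))) := by
  set a : ℝ := ((2*m:ℝ)+1-2*r)*π/(4*N) with ha
  have h2 : 2*(N:ℝ)*a = ((2*m:ℝ)+1-2*r)*π/2 := by
    rw [ha]
    have : (N:ℝ) ≠ 0 := Nat.cast_ne_zero.mpr hN.ne'
    field_simp
    ring
  have := sum_sin_odd_mul a N
  rw [h2, cos_odd_half_pi] at this
  field_simp at this ⊢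
  have e : ∑ x ∈ Finset.range N, Real.sin (a * (2 * (x:ℝ) + 1)) = ∑ x ∈ Finset.range N, Real.sin ((2 * (x:ℝ) + 1) * a) := Finset.sum_congr rfl (fun x _ => by rw [mul_comm])
  rw [e]; linear_combination this
lemma phi_exact (m N : ℕ) (hN : 0 < N)
    (hs : ∀ r ∈ Finset.range (2*m+1),
      Real.sin (((2*(m:ℝ))+1-2*r)*π/(4*N)) ≠ 0) :
    (2/(N : ℝ)) * ∑ k ∈ Finset.range N,
        Real.sin (π * (2 * k + 1) / (4 * N)) * Real.cos (π * (2 * k + 1) / (4 * N)) ^ (2 * m)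
    = (1/((N:ℝ) * 4^m)) * ∑ r ∈ Finset.range (2*m+1),
        (Nat.choose (2*m) r : ℝ) / Real.sin (((2*(m:ℝ))+1-2*r)*π/(4*N)) := by
  have hNr : (N:ℝ) ≠ 0 := Nat.cast_ne_zero.mpr hN.ne'
  have h4 : (2:ℝ)^(2*m) = 4^m := by rw [pow_mul]; norm_num
  have step1 : ∀ k : ℕ,
      Real.sin (π * (2 * k + 1) / (4 * N)) * Real.cos (π * (2 * k + 1) / (4 * N)) ^ (2 * m)
      = (4^m : ℝ)⁻¹ * ∑ r ∈ Finset.range (2*m+1),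
          (Nat.choose (2*m) r : ℝ) *
            Real.sin ((2*(k:ℝ)+1) * (((2*(m:ℝ))+1-2*r)*π/(4*N))) := by
    intro k
    have := sum_choose_sin (2*m) (π * (2 * k + 1) / (4 * N))
    have harg : ∀ r : ℕ, (((2*m : ℕ):ℝ)+1-2*r) * (π * (2 * (k:ℝ) + 1) / (4 * N))
        = (2*(k:ℝ)+1) * (((2*(m:ℝ))+1-2*r)*π/(4*N)) := by
      intro r; push_cast; ring
    rw [Finset.sum_congr rfl (fun r _ => by rw [harg r])] at this
    rw [h4] at this
    rw [this]
    have h4' : (4:ℝ)^m ≠ 0 := by positivity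
    field_simp
  calc (2/(N : ℝ)) * ∑ k ∈ Finset.range N,
        Real.sin (π * (2 * k + 1) / (4 * N)) * Real.cos (π * (2 * k + 1) / (4 * N)) ^ (2 * m)
      = (2/((N:ℝ) * 4^m)) * ∑ k ∈ Finset.range N, ∑ r ∈ Finset.range (2*m+1),
          (Nat.choose (2*m) r : ℝ) *
            Real.sin ((2*(k:ℝ)+1) * (((2*(m:ℝ))+1-2*r)*π/(4*N))) := by
        rw [Finset.sum_congr rfl (fun k _ => step1 k), ← Finset.mul_sum]
        have h4' : (4:ℝ)^m ≠ 0 := by positivity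
        field_simp
        refine Finset.sum_congr rfl fun k _ => Finset.sum_congr rfl fun r _ => ?_
        ring_nf
    _ = (2/((N:ℝ) * 4^m)) * ∑ r ∈ Finset.range (2*m+1),
          (Nat.choose (2*m) r : ℝ) * ∑ k ∈ Finset.range N,
            Real.sin ((2*(k:ℝ)+1) * (((2*(m:ℝ))+1-2*r)*π/(4*N))) := by
        rw [Finset.sum_comm]
        congr 1
        exact Finset.sum_congr rfl fun r _ => (Finset.mul_sum _ _ _).symm
    _ = (2/((N:ℝ) * 4^m)) * ∑ r ∈ Finset.range (2*m+1),
          (Nat.choose (2*m) r : ℝ) * (1/(2 * Real.sin (((2*(m:ℝ))+1-2*r)*π/(4*N)))) := by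
        congr 1
        refine Finset.sum_congr rfl fun r hr => ?_
        rw [sum_sin_exact m r N hN (hs r hr)]
    _ = (1/((N:ℝ) * 4^m)) * ∑ r ∈ Finset.range (2*m+1),
          (Nat.choose (2*m) r : ℝ) / Real.sin (((2*(m:ℝ))+1-2*r)*π/(4*N)) := by
        rw [Finset.mul_sum, Finset.mul_sum]
        refine Finset.sum_congr rfl fun r hr => ?_
        have := hs r hr
        field_simp
lemma odd_ne_zero (m r : ℕ) : (2*(m:ℝ)+1-2*r) ≠ 0 := by
  intro h
  have h' : ((2*m+1 : ℕ) : ℝ) = ((2*r : ℕ) : ℝ) := by push_cast; linarith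
  have := Nat.cast_injective h'
  omega

lemma identity_two (m : ℕ) :
    ∑ r ∈ Finset.range (2*m+1), (Nat.choose (2*m) r : ℝ) * (2*(m:ℝ)+1-2*r)
      = 4^m := by
  set f : ℕ → ℝ := fun r => (Nat.choose (2*m) r : ℝ) * (2*(m:ℝ)+1-2*r) with hf
  have refl := Finset.sum_range_reflect f (2*m+1)
  have hpair : ∀ j ∈ Finset.range (2*m+1), f (2*m+1-1-j) + f j
      = 2 * (Nat.choose (2*m) j : ℝ) := by
    intro j hj
    have hjle : j ≤ 2*m := by simpa using Nat.lt_succ_iff.mp (Finset.mem_range.mp hj)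
    have h1 : 2*m+1-1-j = 2*m - j := by omega
    have h2 : Nat.choose (2*m) (2*m - j) = Nat.choose (2*m) j := Nat.choose_symm hjle
    have h3 : ((2*m - j : ℕ) : ℝ) = 2*(m:ℝ) - j := by
      rw [Nat.cast_sub hjle]; push_cast; ring
    simp only [hf, h1, h2, h3]
    ring
  have key : (∑ r ∈ Finset.range (2*m+1), f r) + (∑ r ∈ Finset.range (2*m+1), f r)
      = ∑ j ∈ Finset.range (2*m+1), 2 * (Nat.choose (2*m) j : ℝ) := by
    nth_rewrite 1 [← refl]
    rw [← Finset.sum_add_distrib]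
    exact Finset.sum_congr rfl hpair
  have hsum : ∑ j ∈ Finset.range (2*m+1), (Nat.choose (2*m) j : ℝ) = 4^m := by
    have := Nat.sum_range_choose (2*m)
    have h4 : (2:ℝ)^(2*m) = 4^m := by rw [pow_mul]; norm_num
    rw [← h4]
    exact_mod_cast congrArg (Nat.cast : ℕ → ℝ) this
  rw [← Finset.mul_sum, hsum] at key
  linarith [key]

lemma integral_sin_mul_const (c : ℝ) (hc : c ≠ 0) :
    ∫ x in (0:ℝ)..(π/2), Real.sin (c*x) = (1 - Real.cos (c*π/2))/c := by
  rw [intervalIntegral.integral_comp_mul_left Real.sin hc, integral_sin]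
  rw [mul_zero, Real.cos_zero]
  rw [smul_eq_mul]
  field_simp

lemma integral_sin_mul_cos_pow (n : ℕ) :
    ∫ x in (0:ℝ)..(π/2), Real.sin x * Real.cos x ^ n = 1/(n+1) := by
  have hder : ∀ x ∈ Set.uIcc (0:ℝ) (π/2),
      HasDerivAt (fun y => -(Real.cos y^(n+1))/(n+1)) (Real.sin x * Real.cos x ^ n) x := by
    intro x _
    have h1 := (Real.hasDerivAt_cos x).pow (n+1)
    have h2 := (h1.neg).div_const ((n:ℝ)+1)
    refine h2.congr_deriv ?_
    have : ((n:ℝ)+1) ≠ 0 := by positivity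
    push_cast
    field_simp
  rw [intervalIntegral.integral_eq_sub_of_hasDerivAt hder
    ((Real.continuous_sin.mul (Real.continuous_cos.pow n)).intervalIntegrable 0 (π/2))]
  rw [Real.cos_pi_div_two, Real.cos_zero]
  have : ((n:ℝ)+1) ≠ 0 := by positivity
  simp only [one_pow, zero_pow (Nat.succ_ne_zero n)]
  field_simp
  norm_num

lemma identity_one (m : ℕ) :
    ∑ r ∈ Finset.range (2*m+1), (Nat.choose (2*m) r : ℝ) / (2*(m:ℝ)+1-2*r)
      = 4^m / (2*(m:ℝ)+1) := by
  have key := congrArg (fun f => ∫ x in (0:ℝ)..(π/2), f x)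
    (funext (fun x => sum_choose_sin (2*m) x))
  simp only at key
  have hint : ∀ r ∈ Finset.range (2*m+1), IntervalIntegrable
      (fun x => (Nat.choose (2*m) r : ℝ) * Real.sin ((((2*m:ℕ):ℝ)+1-2*r)*x))
      MeasureTheory.volume 0 (π/2) := by
    intro r _
    exact (continuous_const.mul (Real.continuous_sin.comp
      (continuous_const.mul continuous_id))).intervalIntegrable 0 (π/2)
  rw [intervalIntegral.integral_finset_sum hint] at key
  have hL : ∀ r ∈ Finset.range (2*m+1),
      ∫ x in (0:ℝ)..(π/2), (Nat.choose (2*m) r : ℝ) * Real.sin ((((2*m:ℕ):ℝ)+1-2*r)*x)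
      = (Nat.choose (2*m) r : ℝ) / (2*(m:ℝ)+1-2*r) := by
    intro r _
    rw [intervalIntegral.integral_const_mul]
    have hc : (2*(m:ℝ)+1-2*r) ≠ 0 := odd_ne_zero m r
    have e : (((2*m:ℕ):ℝ)+1-2*(r:ℝ)) = (2*(m:ℝ)+1-2*r) := by push_cast; ring
    rw [e, integral_sin_mul_const _ hc]
    have e2 : (2*(m:ℝ)+1-2*r)*π/2 = (2*(m:ℝ)+1-2*(r:ℝ))*π/2 := by ring
    rw [e2, cos_odd_half_pi m r]
    ring
  rw [Finset.sum_congr rfl hL] at key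
  have hR : ∫ x in (0:ℝ)..(π/2), 2^(2*m) * Real.sin x * Real.cos x ^ (2*m)
      = (4:ℝ)^m / (2*(m:ℝ)+1) := by
    have : (fun x => (2:ℝ)^(2*m) * Real.sin x * Real.cos x ^ (2*m))
        = fun x => (2:ℝ)^(2*m) * (Real.sin x * Real.cos x ^ (2*m)) := by
      funext x; ring
    rw [this, intervalIntegral.integral_const_mul, integral_sin_mul_cos_pow]
    have h4 : (2:ℝ)^(2*m) = 4^m := by rw [pow_mul]; norm_num
    rw [h4]
    push_cast
    ring
  rw [hR] at key
  exact key
lemma sin_quintic {x : ℝ} (hx : |x| ≤ 1) :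
    |Real.sin x - (x - x^3/6)| ≤ |x|^5 * (5/96) := by
  have hFTC : ∫ t in (0:ℝ)..x, (Real.cos t - (1 - t^2/2))
      = Real.sin x - (x - x^3/6) := by
    have hder : ∀ t ∈ Set.uIcc (0:ℝ) x,
        HasDerivAt (fun y => Real.sin y - (y - y^3/6)) (Real.cos t - (1 - t^2/2)) t := by
      intro t _
      have h1 := (Real.hasDerivAt_sin t).sub
        ((hasDerivAt_id t).sub ((hasDerivAt_pow 3 t).div_const 6))
      refine h1.congr_deriv ?_
      norm_num
      ring
    rw [intervalIntegral.integral_eq_sub_of_hasDerivAt hder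
      ((Real.continuous_cos.sub (continuous_const.sub
        ((continuous_pow 2).div_const 2))).intervalIntegrable 0 x)]
    norm_num
  rw [← hFTC]
  have hb : ∀ t ∈ Set.uIoc (0:ℝ) x, ‖Real.cos t - (1 - t^2/2)‖ ≤ |x|^4 * (5/96) := by
    intro t ht
    have htx : |t| ≤ |x| := by
      rcases Set.mem_uIoc.mp ht with h | h
      · rw [abs_of_pos h.1, abs_of_nonneg (le_trans h.1.le h.2)]; exact h.2
      · rw [abs_of_nonpos h.2, abs_of_neg (lt_of_lt_of_le h.1 h.2)]; linarith [h.1]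
    have := Real.cos_bound (le_trans htx hx)
    calc ‖Real.cos t - (1 - t^2/2)‖ ≤ |t|^4 * (5/96) := this
      _ ≤ |x|^4 * (5/96) := by
          gcongr
  calc ‖∫ t in (0:ℝ)..x, (Real.cos t - (1 - t^2/2))‖
      ≤ |x|^4 * (5/96) * |x - 0| :=
        intervalIntegral.norm_integral_le_of_norm_le_const hb
    _ = |x|^5 * (5/96) := by rw [sub_zero]; ring

lemma inv_sin_bound {x : ℝ} (hx0 : x ≠ 0) (hx : |x| ≤ 1) :
    |1/Real.sin x - 1/x - x/6| ≤ |x|^3 := by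
  have hq := sin_quintic hx
  have hxpos : 0 < |x| := abs_pos.mpr hx0
  have h3 : |x|^3 ≤ |x| := by
    calc |x|^3 ≤ |x|^1 := pow_le_pow_of_le_one (abs_nonneg x) hx (by norm_num)
      _ = |x| := pow_one _
  have h5 : |x|^5 ≤ |x| := by
    calc |x|^5 ≤ |x|^1 := pow_le_pow_of_le_one (abs_nonneg x) hx (by norm_num)
      _ = |x| := pow_one _
  have h53 : |x|^5 ≤ |x|^3 := pow_le_pow_of_le_one (abs_nonneg x) hx (by norm_num)
  have hsin_lb : (3/4)*|x| ≤ |Real.sin x| := by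
    have a1 : |x - x^3/6| - |(x - x^3/6) - Real.sin x| ≤ |Real.sin x| := by
      have := abs_sub_abs_le_abs_sub (x - x^3/6) (Real.sin x)
      linarith [this]
    have a2 : |(x - x^3/6) - Real.sin x| = |Real.sin x - (x - x^3/6)| := abs_sub_comm _ _
    have a3 : |x| - |x|^3/6 ≤ |x - x^3/6| := by
      have := abs_sub_abs_le_abs_sub x (x - x^3/6)
      have e : x - (x - x^3/6) = x^3/6 := by ring
      rw [e] at this
      have e2 : |x^3/6| = |x|^3/6 := by rw [abs_div, abs_pow]; norm_num
      linarith [this, e2.le]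
    rw [a2] at a1
    nlinarith [hq, h3, h5]
  have hs0 : Real.sin x ≠ 0 := by
    intro h; rw [h, abs_zero] at hsin_lb; nlinarith
  have hid : 1/Real.sin x - 1/x - x/6
      = (6*x - 6*Real.sin x - x^2*Real.sin x)/(6*x*Real.sin x) := by
    field_simp
  have hx2 : x^2 ≤ 1 := by nlinarith [sq_abs x]
  have hnum : |6*x - 6*Real.sin x - x^2*Real.sin x| ≤ |x|^5 := by
    have e : 6*x - 6*Real.sin x - x^2*Real.sin x
        = x^5/6 - (6+x^2)*(Real.sin x - (x - x^3/6)) := by ring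
    rw [e]
    have b1 : |x^5/6 - (6+x^2)*(Real.sin x - (x - x^3/6))|
        ≤ |x^5/6| + |(6+x^2)*(Real.sin x - (x - x^3/6))| := abs_sub _ _
    have b2 : |x^5/6| = |x|^5/6 := by rw [abs_div, abs_pow]; norm_num
    have b3 : |(6+x^2)*(Real.sin x - (x - x^3/6))|
        = (6+x^2) * |Real.sin x - (x - x^3/6)| := by
      rw [abs_mul, abs_of_pos (by positivity)]
    have b4 : (6+x^2) * |Real.sin x - (x - x^3/6)| ≤ 7 * (|x|^5 * (5/96)) := by
      have hnn : (0:ℝ) ≤ |Real.sin x - (x - x^3/6)| := abs_nonneg _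
      nlinarith [hq]
    linarith [b1, b4, b2.le, b2.ge, b3.le, b3.ge, pow_nonneg (abs_nonneg x) 5]
  have hden : (9/2)*|x|^2 ≤ |6*x*Real.sin x| := by
    rw [abs_mul, abs_mul]
    have : |(6:ℝ)| = 6 := by norm_num
    rw [this]
    nlinarith [hsin_lb, hxpos]
  rw [hid, abs_div]
  rw [div_le_iff₀ (lt_of_lt_of_le (by positivity) hden)]
  calc |6*x - 6*Real.sin x - x^2*Real.sin x| ≤ |x|^5 := hnum
    _ ≤ |x|^3 * ((9/2)*|x|^2) := by nlinarith [pow_nonneg (abs_nonneg x) 5]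
    _ ≤ |x|^3 * |6*x*Real.sin x| := by
        have := pow_nonneg (abs_nonneg x) 3
        gcongr
lemma sum_choose_real (m : ℕ) :
    ∑ r ∈ Finset.range (2*m+1), (Nat.choose (2*m) r : ℝ) = 4^m := by
  have := Nat.sum_range_choose (2*m)
  have h4 : (2:ℝ)^(2*m) = 4^m := by rw [pow_mul]; norm_num
  rw [← h4]
  exact_mod_cast congrArg (Nat.cast : ℕ → ℝ) this

/-- asymptotic expansion Φ_m(N) = 4/(π(2m+1)) + π/(24N²) + O(N⁻⁴). -/
theorem phi_asymptotic (m : ℕ) :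
    (fun N : ℕ =>
        (2 / (N : ℝ)) * ∑ k ∈ Finset.range N,
            Real.sin (π * (2 * k + 1) / (4 * N)) * Real.cos (π * (2 * k + 1) / (4 * N)) ^ (2 * m)
          - 4 / (π * (2 * m + 1)) - π / (24 * (N : ℝ) ^ 2))
      =O[atTop] (fun N : ℕ => ((N : ℝ)) ^ (-(4 : ℤ))) := by
  rw [isBigO_iff]
  refine ⟨(2*(m:ℝ)+1)^3, ?_⟩
  filter_upwards [eventually_ge_atTop (2*m+2)] with N hN
  have hNpos : 0 < N := by omega
  have hNr : (0:ℝ) < N := by exact_mod_cast hNpos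
  have hNr' : (N:ℝ) ≠ 0 := hNr.ne'
  have hN1 : (2*(m:ℝ)+1) ≤ N := by
    have h : (2*m+1 : ℕ) ≤ N := by omega
    have := (Nat.cast_le (α := ℝ)).mpr h
    push_cast at this
    linarith
  have hpi0 : 0 < π := Real.pi_pos
  have hpi4 : π ≤ 4 := Real.pi_le_four
  have hm1 : (0:ℝ) < 2*(m:ℝ)+1 := by positivity
  set x : ℕ → ℝ := fun r => (2*(m:ℝ)+1-2*r)*π/(4*N) with hx
  -- per-r facts
  have hjabs : ∀ r ∈ Finset.range (2*m+1), |2*(m:ℝ)+1-2*r| ≤ 2*(m:ℝ)+1 := by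
    intro r hr
    have h1 : (r:ℝ) ≤ 2*m := by exact_mod_cast Nat.lt_succ_iff.mp (Finset.mem_range.mp hr)
    have h2 : (0:ℝ) ≤ (r:ℝ) := Nat.cast_nonneg r
    rw [abs_le]
    constructor <;> [push_cast; skip] <;> [linarith; linarith]
  have hxabs : ∀ r ∈ Finset.range (2*m+1), |x r| ≤ (2*(m:ℝ)+1)/N := by
    intro r hr
    have : |x r| = |2*(m:ℝ)+1-2*r| * π / (4*N) := by
      rw [hx]
      rw [abs_div, abs_mul, abs_of_pos hpi0, abs_of_pos (by positivity : (0:ℝ) < 4*N)]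
    rw [this]
    calc |2*(m:ℝ)+1-2*r| * π / (4*N) ≤ (2*(m:ℝ)+1) * 4 / (4*N) := by
          apply div_le_div_of_nonneg_right ?_ (by positivity)
          · exact mul_le_mul (hjabs r hr) hpi4 hpi0.le hm1.le
      _ = (2*(m:ℝ)+1)/N := by field_simp
  have hxabs1 : ∀ r ∈ Finset.range (2*m+1), |x r| ≤ 1 := by
    intro r hr
    calc |x r| ≤ (2*(m:ℝ)+1)/N := hxabs r hr
      _ ≤ 1 := by rw [div_le_one hNr]; exact hN1
  have hxne : ∀ r : ℕ, x r ≠ 0 := by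
    intro r
    rw [hx]
    have := odd_ne_zero m r
    positivity
  have hsne : ∀ r ∈ Finset.range (2*m+1), Real.sin (x r) ≠ 0 := by
    intro r hr
    have h1 : |x r| ≤ 1 := hxabs1 r hr
    have h2 : -π < x r := by
      have := abs_le.mp h1
      linarith [this.1, Real.pi_gt_three]
    have h3 : x r < π := by
      have := abs_le.mp h1
      linarith [this.2, Real.pi_gt_three]
    rw [ne_eq, Real.sin_eq_zero_iff_of_lt_of_lt h2 h3]
    exact hxne r
  -- exact formula
  rw [phi_exact m N hNpos hsne]
  -- error decomposition
  set E : ℕ → ℝ := fun r =>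
    (1/(N:ℝ))*(1/Real.sin (x r)) - (4/π)/(2*(m:ℝ)+1-2*r)
      - (2*(m:ℝ)+1-2*r)*π/(24*(N:ℝ)^2) with hE
  have hsum_split : ∑ r ∈ Finset.range (2*m+1), (Nat.choose (2*m) r : ℝ) * E r
      = (1/(N:ℝ)) * (∑ r ∈ Finset.range (2*m+1),
            (Nat.choose (2*m) r : ℝ)/Real.sin (x r))
        - (4/π) * (4^m/(2*(m:ℝ)+1)) - (π/(24*(N:ℝ)^2)) * 4^m := by
    have h : ∀ r ∈ Finset.range (2*m+1), (Nat.choose (2*m) r : ℝ) * E r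
        = (1/(N:ℝ))*((Nat.choose (2*m) r : ℝ)/Real.sin (x r))
          - (4/π)*((Nat.choose (2*m) r : ℝ)/(2*(m:ℝ)+1-2*r))
          - (π/(24*(N:ℝ)^2))*((Nat.choose (2*m) r : ℝ)*(2*(m:ℝ)+1-2*r)) := by
      intro r _
      rw [hE]
      ring
    rw [Finset.sum_congr rfl h, Finset.sum_sub_distrib, Finset.sum_sub_distrib,
      ← Finset.mul_sum, ← Finset.mul_sum, ← Finset.mul_sum, identity_one, identity_two]
  have h4m : (0:ℝ) < 4^m := by positivity
  have hmain : (1/((N:ℝ) * 4^m)) * ∑ r ∈ Finset.range (2*m+1),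
        (Nat.choose (2*m) r : ℝ) / Real.sin (x r)
        - 4 / (π * (2 * m + 1)) - π / (24 * (N : ℝ) ^ 2)
      = (1/(4^m:ℝ)) * ∑ r ∈ Finset.range (2*m+1), (Nat.choose (2*m) r : ℝ) * E r := by
    rw [hsum_split]
    field_simp
  rw [hmain]
  -- bound each E r
  have hEbound : ∀ r ∈ Finset.range (2*m+1), |E r| ≤ (2*(m:ℝ)+1)^3 / (N:ℝ)^4 := by
    intro r hr
    have hj := odd_ne_zero m r
    have e1 : (1:ℝ)/(N:ℝ) * (1/(x r)) = 4/π/(2*(m:ℝ)+1-2*(r:ℝ)) := by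
      rw [hx]
      field_simp
    have e2 : (1:ℝ)/(N:ℝ) * (x r/6) = (2*(m:ℝ)+1-2*(r:ℝ))*π/(24*(N:ℝ)^2) := by
      rw [hx]
      field_simp
      ring
    have hEr : E r = (1/(N:ℝ)) * (1/Real.sin (x r) - 1/(x r) - (x r)/6) := by
      rw [hE]
      simp only [mul_sub]
      rw [e1, e2]
    rw [hEr, abs_mul]
    have h1 : |1/(N:ℝ)| = 1/(N:ℝ) := abs_of_pos (by positivity)
    rw [h1]
    have h2 : |1/Real.sin (x r) - 1/(x r) - (x r)/6| ≤ |x r|^3 :=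
      inv_sin_bound (hxne r) (hxabs1 r hr)
    have h3 : |x r|^3 ≤ ((2*(m:ℝ)+1)/N)^3 :=
      pow_le_pow_left₀ (abs_nonneg _) (hxabs r hr) 3
    calc (1/(N:ℝ)) * |1/Real.sin (x r) - 1/(x r) - (x r)/6|
        ≤ (1/(N:ℝ)) * ((2*(m:ℝ)+1)/N)^3 := by
          apply mul_le_mul_of_nonneg_left (le_trans h2 h3) (by positivity)
      _ = (2*(m:ℝ)+1)^3 / (N:ℝ)^4 := by field_simp
  have hfinal : |(1/(4^m:ℝ)) * ∑ r ∈ Finset.range (2*m+1),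
        (Nat.choose (2*m) r : ℝ) * E r| ≤ (2*(m:ℝ)+1)^3 / (N:ℝ)^4 := by
    rw [abs_mul, abs_of_pos (by positivity : (0:ℝ) < 1/(4^m:ℝ))]
    calc (1/(4^m:ℝ)) * |∑ r ∈ Finset.range (2*m+1), (Nat.choose (2*m) r : ℝ) * E r|
        ≤ (1/(4^m:ℝ)) * ∑ r ∈ Finset.range (2*m+1),
            |(Nat.choose (2*m) r : ℝ) * E r| := by
          apply mul_le_mul_of_nonneg_left (Finset.abs_sum_le_sum_abs _ _) (by positivity)
      _ ≤ (1/(4^m:ℝ)) * ∑ r ∈ Finset.range (2*m+1),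
            (Nat.choose (2*m) r : ℝ) * ((2*(m:ℝ)+1)^3 / (N:ℝ)^4) := by
          apply mul_le_mul_of_nonneg_left ?_ (by positivity)
          apply Finset.sum_le_sum
          intro r hr
          rw [abs_mul, abs_of_nonneg (Nat.cast_nonneg _)]
          exact mul_le_mul_of_nonneg_left (hEbound r hr) (Nat.cast_nonneg _)
      _ = (2*(m:ℝ)+1)^3 / (N:ℝ)^4 := by
          rw [← Finset.sum_mul, sum_choose_real]
          field_simp
  have hnorm : ‖((N:ℝ)) ^ (-(4:ℤ))‖ = 1/(N:ℝ)^4 := by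
    rw [Real.norm_eq_abs, abs_of_pos (by positivity : (0:ℝ) < (N:ℝ)^(-(4:ℤ)))]
    rw [zpow_neg]
    norm_num
  rw [Real.norm_eq_abs, hnorm]
  calc |(1/(4^m:ℝ)) * ∑ r ∈ Finset.range (2*m+1), (Nat.choose (2*m) r : ℝ) * E r|
      ≤ (2*(m:ℝ)+1)^3 / (N:ℝ)^4 := hfinal
    _ = (2*(m:ℝ)+1)^3 * (1/(N:ℝ)^4) := by ring
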